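/- Let A ∈ T_{m,n} be a P tensor and q ∈ ℝⁿ. Then the solution set of TCP(q,A), namely {x ∈ ℝⁿ : x ≥ 0, A x^{m-1}+q ≥ 0, xᵀ(A x^{m-1}+q)=0}, is bounded. -/

import Mathlib

/-!
Write `F(x) = A x^{m-1}`, homogeneous of degree `k = m - 1`, and measure the P property by
`pMargin A x = ∑ i, max (x i * F(x) i) 0`, which is continuous, positive away from `0` and
homogeneous of degree `k + 1`. Its minimum `δ > 0` on the unit sphere gives
`‖x‖ ^ (k + 1) * δ ≤ pMargin A x`. On a solution of TCP(q, A) complementarity forces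
`x i * F(x) i = -(x i * q i)`, so `pMargin A x ≤ n * ‖x‖ * ‖q‖`; for `k ≥ 1` this bounds `‖x‖`.
For `k = 0` the map `F` is constant, and no nonzero vector satisfies the P condition.
-/

/-- `(A x^{m-1})_i = ∑_{i_2,…,i_m} a_{i i_2 ⋯ i_m} x_{i_2} ⋯ x_{i_m}`,
for a real tensor of order `k+1` and dimension `n`, encoded as
`A : Fin n → (Fin k → Fin n) → ℝ`. -/
noncomputable def tApply {n k : ℕ} (A : Fin n → (Fin k → Fin n) → ℝ)
    (x : Fin n → ℝ) (i : Fin n) : ℝ :=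
  ∑ f : Fin k → Fin n, A i f * ∏ j, x (f j)

section PTensor

variable {n k : ℕ} (A : Fin n → (Fin k → Fin n) → ℝ)

def IsPTensor : Prop :=
  ∀ x : Fin n → ℝ, x ≠ 0 → ∃ i, x i * tApply A x i > 0

def tcpSolutions (q : Fin n → ℝ) : Set (Fin n → ℝ) :=
  {x | (∀ i, 0 ≤ x i) ∧ (∀ i, 0 ≤ tApply A x i + q i) ∧ ∑ i, x i * (tApply A x i + q i) = 0}

noncomputable def pMargin (x : Fin n → ℝ) : ℝ :=
  ∑ i, max (x i * tApply A x i) 0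

theorem continuous_tApply (i : Fin n) : Continuous fun x => tApply A x i :=
  continuous_finsetSum _ fun f _ =>
    continuous_const.mul (continuous_finsetProd _ fun j _ => continuous_apply (f j))

theorem tApply_smul (t : ℝ) (x : Fin n → ℝ) (i : Fin n) :
    tApply A (t • x) i = t ^ k * tApply A x i := by
  simp only [tApply, Finset.mul_sum, Pi.smul_apply, smul_eq_mul, Finset.prod_mul_distrib,
    Finset.prod_const, Finset.card_univ, Fintype.card_fin]
  exact Finset.sum_congr rfl fun f _ => by ring

theorem continuous_pMargin : Continuous (pMargin A) :=
  continuous_finsetSum _ fun i _ =>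
    ((continuous_apply i).mul (continuous_tApply A i)).max continuous_const

theorem pMargin_nonneg (x : Fin n → ℝ) : 0 ≤ pMargin A x :=
  Finset.sum_nonneg fun _ _ => le_max_right _ _

theorem pMargin_smul {t : ℝ} (ht : 0 ≤ t) (x : Fin n → ℝ) :
    pMargin A (t • x) = t ^ (k + 1) * pMargin A x := by
  simp only [pMargin, Finset.mul_sum, tApply_smul, Pi.smul_apply, smul_eq_mul]
  refine Finset.sum_congr rfl fun i _ => ?_
  rw [mul_max_of_nonneg _ _ (by positivity), mul_zero]
  congr 1
  ring

theorem pMargin_le_of_mem_tcpSolutions {q x : Fin n → ℝ} (hx : x ∈ tcpSolutions A q) :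
    pMargin A x ≤ n * ‖x‖ * ‖q‖ := by
  obtain ⟨hx_nonneg, hw_nonneg, hcompl⟩ := hx
  have hcompl_i : ∀ i, x i * (tApply A x i + q i) = 0 := fun i =>
    (Finset.sum_eq_zero_iff_of_nonneg fun i _ => mul_nonneg (hx_nonneg i) (hw_nonneg i)).1
      hcompl i (Finset.mem_univ i)
  have hterm : ∀ i, max (x i * tApply A x i) 0 ≤ ‖x‖ * ‖q‖ := fun i =>
    max_le
      (calc x i * tApply A x i = -(x i * q i) := by linarith [hcompl_i i]
        _ ≤ |x i| * |q i| := by rw [← abs_mul]; exact neg_le_abs _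
        _ ≤ ‖x‖ * ‖q‖ := mul_le_mul (norm_le_pi_norm x i) (norm_le_pi_norm q i)
            (abs_nonneg _) (norm_nonneg _))
      (by positivity)
  calc pMargin A x ≤ ∑ _i : Fin n, ‖x‖ * ‖q‖ := Finset.sum_le_sum fun i _ => hterm i
    _ = n * ‖x‖ * ‖q‖ := by simp [mul_assoc]

namespace IsPTensor

variable {A}

theorem pMargin_pos (hA : IsPTensor A) {x : Fin n → ℝ} (hx : x ≠ 0) : 0 < pMargin A x := by
  obtain ⟨i, hi⟩ := hA x hx
  exact Finset.sum_pos' (fun j _ => le_max_right _ _) ⟨i, Finset.mem_univ i, lt_max_of_lt_left hi⟩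

theorem exists_pos_le_pMargin_of_norm_eq_one (hA : IsPTensor A) :
    ∃ δ > 0, ∀ y : Fin n → ℝ, ‖y‖ = 1 → δ ≤ pMargin A y := by
  rcases (Metric.sphere (0 : Fin n → ℝ) 1).eq_empty_or_nonempty with hempty | hne
  · refine ⟨1, one_pos, fun y hy => ?_⟩
    have : y ∈ Metric.sphere (0 : Fin n → ℝ) 1 := mem_sphere_zero_iff_norm.2 hy
    simp [hempty] at this
  obtain ⟨y₀, hy₀, hmin⟩ :=
    (isCompact_sphere 0 1).exists_isMinOn hne (continuous_pMargin A).continuousOn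
  have hy₀_ne : y₀ ≠ 0 :=
    ne_zero_of_norm_ne_zero (by rw [mem_sphere_zero_iff_norm.1 hy₀]; exact one_ne_zero)
  exact ⟨pMargin A y₀, hA.pMargin_pos hy₀_ne, fun y hy => hmin (mem_sphere_zero_iff_norm.2 hy)⟩

theorem exists_pos_norm_pow_mul_le_pMargin (hA : IsPTensor A) :
    ∃ δ > 0, ∀ x : Fin n → ℝ, ‖x‖ ^ (k + 1) * δ ≤ pMargin A x := by
  obtain ⟨δ, hδ, hle⟩ := hA.exists_pos_le_pMargin_of_norm_eq_one
  refine ⟨δ, hδ, fun x => ?_⟩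
  rcases eq_or_ne x 0 with rfl | hx
  · simpa using pMargin_nonneg A 0
  have ht : 0 < ‖x‖ := norm_pos_iff.2 hx
  calc ‖x‖ ^ (k + 1) * δ ≤ ‖x‖ ^ (k + 1) * pMargin A (‖x‖⁻¹ • x) := by
        gcongr
        exact hle _ (by rw [norm_smul, norm_inv, norm_norm, inv_mul_cancel₀ ht.ne'])
    _ = pMargin A x := by rw [← pMargin_smul A ht.le, smul_inv_smul₀ ht.ne']

theorem eq_zero_of_order_zero {A : Fin n → (Fin 0 → Fin n) → ℝ} (hA : IsPTensor A)
    (x : Fin n → ℝ) : x = 0 := by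
  set c : Fin n → ℝ := fun i => ∑ f, A i f
  have hconst : ∀ y i, tApply A y i = c i := fun y i => by simp [tApply, c]
  by_contra hx
  by_cases hc : c = 0
  · obtain ⟨i, hi⟩ := hA x hx
    simp [hconst, hc] at hi
  · obtain ⟨i, hi⟩ := hA (-c) (neg_ne_zero.2 hc)
    rw [hconst, Pi.neg_apply] at hi
    nlinarith [sq_nonneg (c i)]

theorem isBounded_tcpSolutions {A : Fin n → (Fin (k + 1) → Fin n) → ℝ} (hA : IsPTensor A)
    (q : Fin n → ℝ) : Bornology.IsBounded (tcpSolutions A q) := by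
  obtain ⟨δ, hδ, hcoercive⟩ := hA.exists_pos_norm_pow_mul_le_pMargin
  refine isBounded_iff_forall_norm_le.2 ⟨max 1 (n * ‖q‖ / δ), fun x hx => ?_⟩
  rcases le_or_gt ‖x‖ 1 with hle | hgt
  · exact le_max_of_le_left hle
  have hsq : ‖x‖ ^ 2 ≤ ‖x‖ ^ (k + 2) := pow_le_pow_right₀ hgt.le (by omega)
  have hbound : ‖x‖ ^ (k + 2) * δ ≤ n * ‖x‖ * ‖q‖ :=
    (hcoercive x).trans (pMargin_le_of_mem_tcpSolutions A hx)
  have hscaled : ‖x‖ * (‖x‖ * δ) ≤ ‖x‖ * (n * ‖q‖) := by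
    nlinarith [mul_le_mul_of_nonneg_right hsq hδ.le]
  exact le_max_of_le_right ((le_div_iff₀ hδ).2 (le_of_mul_le_mul_left hscaled (by linarith)))

end IsPTensor

end PTensor

/-- If A is a P tensor, the solution set of TCP(q,A) is
bounded. -/
theorem stmt_7 {m n : ℕ} (A : Fin n → (Fin (m - 1) → Fin n) → ℝ)
    (hP : ∀ x : Fin n → ℝ, x ≠ 0 → ∃ i, x i * tApply A x i > 0)
    (q : Fin n → ℝ) :
    Bornology.IsBounded {x : Fin n → ℝ |
      (∀ i, 0 ≤ x i) ∧ (∀ i, 0 ≤ tApply A x i + q i) ∧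
        ∑ i, x i * (tApply A x i + q i) = 0} := by
  change IsPTensor A at hP
  change Bornology.IsBounded (tcpSolutions A q)
  generalize m - 1 = k at A hP
  cases k with
  | zero => exact Bornology.isBounded_singleton.subset fun x _ =>
      Set.mem_singleton_iff.2 (hP.eq_zero_of_order_zero x)
  | succ k => exact hP.isBounded_tcpSolutions q
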